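/- arXiv:2311.18084 — 3 statements merged into one kernel-verified Lean document; each statement's English description precedes it below -/
import Mathlib

section
/- Assume the Poincaré inequality ‖v‖_α ≤ C_P ‖dv‖_{γ⁻¹} holds for all v ∈ V¹ with ⟨βv, z⟩ = 0 for all z ∈ N(d). Let w ∈ V¹ and suppose there exist p ∈ W¹ and q* ∈ W² such that ⟨αp, v⟩ − ⟨w*, dv⟩ = −⟨βw, v⟩ for all v ∈ V¹ (with some w* ∈ W²) and dw = −γ q*. Then ‖w‖_α ≤ (1/c_β)‖p‖_α + C_P ‖q*‖_γ, where c_β is the lower norm-equivalence constant c_β‖u‖_α² ≤ ‖u‖_β². -/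
open scoped RealInnerProductSpace

/-- Cauchy–Schwarz for a symmetric positive semidefinite operator. -/
lemma aux_cs {W : Type*} [NormedAddCommGroup W] [InnerProductSpace ℝ W]
    (A : W →L[ℝ] W) (hsym : ∀ x y : W, ⟪A x, y⟫ = ⟪x, A y⟫)
    (hpos : ∀ x : W, 0 ≤ ⟪A x, x⟫) (x y : W) :
    |⟪A x, y⟫| ≤ Real.sqrt ⟪A x, x⟫ * Real.sqrt ⟪A y, y⟫ := by
  have hyx : ⟪A y, x⟫ = ⟪A x, y⟫ := by
    rw [hsym y x, real_inner_comm]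
  have key : ∀ t : ℝ, 0 ≤ ⟪A y, y⟫ * (t * t) + (2 * ⟪A x, y⟫) * t + ⟪A x, x⟫ := by
    intro t
    have h := hpos (x + t • y)
    simp only [map_add, map_smul, inner_add_left, inner_add_right,
      real_inner_smul_left, real_inner_smul_right, hyx] at h
    nlinarith [h]
  have hd := discrim_le_zero key
  rw [discrim] at hd
  have h1 : ⟪A x, y⟫ ^ 2 ≤ ⟪A x, x⟫ * ⟪A y, y⟫ := by nlinarith [hd]
  calc |⟪A x, y⟫| = Real.sqrt (⟪A x, y⟫ ^ 2) := (Real.sqrt_sq_eq_abs _).symm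
    _ ≤ Real.sqrt (⟪A x, x⟫ * ⟪A y, y⟫) := Real.sqrt_le_sqrt h1
    _ = Real.sqrt ⟪A x, x⟫ * Real.sqrt ⟪A y, y⟫ := Real.sqrt_mul (hpos x) _

/-- Triangle inequality for the seminorm induced by a symmetric psd operator. -/
lemma aux_tri {W : Type*} [NormedAddCommGroup W] [InnerProductSpace ℝ W]
    (A : W →L[ℝ] W) (hsym : ∀ x y : W, ⟪A x, y⟫ = ⟪x, A y⟫)
    (hpos : ∀ x : W, 0 ≤ ⟪A x, x⟫) (x y : W) :
    Real.sqrt ⟪A (x + y), x + y⟫ ≤ Real.sqrt ⟪A x, x⟫ + Real.sqrt ⟪A y, y⟫ := by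
  have hyx : ⟪A y, x⟫ = ⟪A x, y⟫ := by rw [hsym y x, real_inner_comm]
  have hcs := le_of_abs_le (aux_cs A hsym hpos x y)
  have hexp : ⟪A (x + y), x + y⟫ = ⟪A x, x⟫ + 2 * ⟪A x, y⟫ + ⟪A y, y⟫ := by
    rw [map_add, inner_add_left, inner_add_right, inner_add_right, hyx]; ring
  have hsx := Real.sq_sqrt (hpos x)
  have hsy := Real.sq_sqrt (hpos y)
  have h2 : ⟪A (x + y), x + y⟫ ≤ (Real.sqrt ⟪A x, x⟫ + Real.sqrt ⟪A y, y⟫) ^ 2 := by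
    rw [hexp]; nlinarith [hcs, hsx, hsy]
  calc Real.sqrt ⟪A (x + y), x + y⟫ ≤
      Real.sqrt ((Real.sqrt ⟪A x, x⟫ + Real.sqrt ⟪A y, y⟫) ^ 2) := Real.sqrt_le_sqrt h2
    _ = |Real.sqrt ⟪A x, x⟫ + Real.sqrt ⟪A y, y⟫| := Real.sqrt_sq_eq_abs _
    _ = Real.sqrt ⟪A x, x⟫ + Real.sqrt ⟪A y, y⟫ := by
        rw [abs_of_nonneg (by positivity)]

/-- Key intermediate estimate: under the Poincaré inequality on N(d)^⊥β and the
β-orthogonal splitting, a w ∈ V¹ satisfying the variational identity with data p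
and dw = −γq* obeys ‖w‖_α ≤ (1/c_β)‖p‖_α + C_P ‖q*‖_γ. -/
theorem stmt_7
    {W1 W2 : Type*} [NormedAddCommGroup W1] [InnerProductSpace ℝ W1] [CompleteSpace W1]
    [NormedAddCommGroup W2] [InnerProductSpace ℝ W2] [CompleteSpace W2]
    (V1 : Submodule ℝ W1) (d : V1 →ₗ[ℝ] W2)
    (α β : W1 ≃L[ℝ] W1) (γ : W2 ≃L[ℝ] W2)
    (hαsym : ∀ x y : W1, ⟪α x, y⟫ = ⟪x, α y⟫)
    (hβsym : ∀ x y : W1, ⟪β x, y⟫ = ⟪x, β y⟫)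
    (hγsym : ∀ x y : W2, ⟪γ x, y⟫ = ⟪x, γ y⟫)
    (hαpos : ∀ x : W1, 0 ≤ ⟪α x, x⟫)
    (hγpos : ∀ x : W2, 0 ≤ ⟪γ x, x⟫)
    (cβ CP : ℝ) (hcβ : 0 < cβ) (hCP : 0 < CP)
    (hβlow : ∀ x : W1, cβ * ⟪α x, x⟫ ≤ ⟪β x, x⟫)
    (hpoincare : ∀ v : V1, (∀ z : V1, d z = 0 → ⟪β (v : W1), (z : W1)⟫ = 0) →
      Real.sqrt ⟪α (v : W1), (v : W1)⟫ ≤ CP * Real.sqrt ⟪γ.symm (d v), d v⟫)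
    (hsplit : ∀ v : V1, ∃ v0 v1 : V1,
      d v0 = 0 ∧ (v : W1) = (v0 : W1) + (v1 : W1) ∧
      ∀ z : V1, d z = 0 → ⟪β (v1 : W1), (z : W1)⟫ = 0)
    (w : V1) (p : W1) (wstar qs : W2)
    (heq : ∀ v : V1, ⟪α p, (v : W1)⟫ - ⟪wstar, d v⟫ = -⟪β (w : W1), (v : W1)⟫)
    (hq : d w = -γ qs) :
    Real.sqrt ⟪α (w : W1), (w : W1)⟫ ≤
      (1 / cβ) * Real.sqrt ⟪α p, p⟫ + CP * Real.sqrt ⟪γ qs, qs⟫ := by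
  obtain ⟨w0, w1, hdw0, hco, horth⟩ := hsplit w
  -- w = w0 + w1 in V1
  have hwv : w = w0 + w1 := by
    apply Subtype.ext
    simpa using hco
  -- d w1 = -γ qs
  have hdw1 : d w1 = -γ qs := by
    rw [hwv, map_add, hdw0, zero_add] at hq
    exact hq
  -- bound on w1 via Poincaré
  have hb1 : Real.sqrt ⟪α (w1 : W1), (w1 : W1)⟫ ≤ CP * Real.sqrt ⟪γ qs, qs⟫ := by
    have h := hpoincare w1 horth
    rw [hdw1] at h
    have : ⟪γ.symm (-γ qs), -γ qs⟫ = ⟪γ qs, qs⟫ := by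
      simp [real_inner_comm (γ qs) qs]
    rwa [this] at h
  -- bound on w0
  have hb0 : Real.sqrt ⟪α (w0 : W1), (w0 : W1)⟫ ≤ (1 / cβ) * Real.sqrt ⟪α p, p⟫ := by
    have h0 := heq w0
    rw [hdw0, inner_zero_right] at h0
    have hortho0 : ⟪β (w1 : W1), (w0 : W1)⟫ = 0 := horth w0 hdw0
    have hbw : ⟪β (w : W1), (w0 : W1)⟫ = ⟪β (w0 : W1), (w0 : W1)⟫ := by
      rw [hco, map_add, inner_add_left, hortho0, add_zero]
    have hkey : ⟪β (w0 : W1), (w0 : W1)⟫ = -⟪α p, (w0 : W1)⟫ := by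
      rw [← hbw]; linarith [h0]
    have hcs : -⟪α p, (w0 : W1)⟫ ≤
        Real.sqrt ⟪α p, p⟫ * Real.sqrt ⟪α (w0 : W1), (w0 : W1)⟫ :=
      le_trans (neg_le_abs _) (aux_cs (α : W1 →L[ℝ] W1) hαsym hαpos p (w0 : W1))
    set a := Real.sqrt ⟪α (w0 : W1), (w0 : W1)⟫ with ha
    have hsq : ⟪α (w0 : W1), (w0 : W1)⟫ = a ^ 2 := (Real.sq_sqrt (hαpos _)).symm
    have hchain : cβ * a ^ 2 ≤ Real.sqrt ⟪α p, p⟫ * a := by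
      calc cβ * a ^ 2 = cβ * ⟪α (w0 : W1), (w0 : W1)⟫ := by rw [hsq]
        _ ≤ ⟪β (w0 : W1), (w0 : W1)⟫ := hβlow _
        _ = -⟪α p, (w0 : W1)⟫ := hkey
        _ ≤ Real.sqrt ⟪α p, p⟫ * a := hcs
    rcases eq_or_lt_of_le (Real.sqrt_nonneg ⟪α (w0 : W1), (w0 : W1)⟫) with h | h
    · rw [← ha] at h
      rw [← h]; positivity
    · rw [← ha] at h
      rw [div_mul_eq_mul_div, le_div_iff₀ hcβ]
      nlinarith [hchain, h]
  calc Real.sqrt ⟪α (w : W1), (w : W1)⟫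
      = Real.sqrt ⟪α ((w0 : W1) + (w1 : W1)), (w0 : W1) + (w1 : W1)⟫ := by rw [hco]
    _ ≤ Real.sqrt ⟪α (w0 : W1), (w0 : W1)⟫ + Real.sqrt ⟪α (w1 : W1), (w1 : W1)⟫ :=
        aux_tri (α : W1 →L[ℝ] W1) hαsym hαpos _ _
    _ ≤ (1 / cβ) * Real.sqrt ⟪α p, p⟫ + CP * Real.sqrt ⟪γ qs, qs⟫ := add_le_add hb0 hb1
end

section
/- Let (u_n, u*_n), n ≥ 0, satisfy α d_τ u_n − d* u_n* = −β u_n and γ d_τ u_n* + d u_n = 0 for n ≥ 1, and define w_n = w₀ + τ Σ_{k=1}^n u_k, w_n* = w₀* + τ Σ_{k=1}^n u_k*, where (w₀, w₀*) solves β w₀ − d* w₀* = −α u₀ and d w₀ = −γ u₀*. Then α d_τ w_n − d* w_n* = −β w_n and γ d_τ w_n* + d w_n = 0 for all n ≥ 1. -/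
open scoped RealInnerProductSpace

/-!
Write the scheme as `M (d_τ U_n) + A U_n = 0` for the pair `U_n = (u_n, u_n*)`, with
`M = (α, γ)` and `A (v, v*) = (β v − d* v*, d v)`. Since `d_τ W_n = U_n`, the claim is that the
residual `M U_n + A W_n` vanishes. It vanishes at `n = 0` by the choice of `W_0`, and its increment
`M (U_n − U_{n−1}) + τ A U_n` is `τ` times the scheme at step `n`.
-/

open Finset

section ImplicitEuler

variable {𝕜 E F : Type*} [Field 𝕜] [AddCommGroup E] [Module 𝕜 E] [AddCommGroup F] [Module 𝕜 F]

def discretePrimitive (τ : 𝕜) (w₀ : E) (u : ℕ → E) (n : ℕ) : E :=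
  w₀ + τ • ∑ k ∈ Icc 1 n, u k

@[simp]
theorem discretePrimitive_zero (τ : 𝕜) (w₀ : E) (u : ℕ → E) :
    discretePrimitive τ w₀ u 0 = w₀ := by
  simp [discretePrimitive]

theorem discretePrimitive_succ (τ : 𝕜) (w₀ : E) (u : ℕ → E) (n : ℕ) :
    discretePrimitive τ w₀ u (n + 1) = discretePrimitive τ w₀ u n + τ • u (n + 1) := by
  simp only [discretePrimitive, sum_Icc_succ_top (Nat.le_add_left 1 n), smul_add, add_assoc]

theorem discretePrimitive_prodMk {G : Type*} [AddCommGroup G] [Module 𝕜 G] (τ : 𝕜) (a : E)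
    (b : G) (u : ℕ → E) (v : ℕ → G) (n : ℕ) :
    discretePrimitive τ (a, b) (fun k ↦ (u k, v k)) n =
      (discretePrimitive τ a u n, discretePrimitive τ b v n) := by
  ext <;> simp [discretePrimitive, Prod.fst_sum, Prod.snd_sum]

theorem inv_smul_discretePrimitive_sub_pred {τ : 𝕜} (hτ : τ ≠ 0) (w₀ : E) (u : ℕ → E) {n : ℕ}
    (hn : 1 ≤ n) :
    τ⁻¹ • (discretePrimitive τ w₀ u n - discretePrimitive τ w₀ u (n - 1)) = u n := by
  obtain ⟨m, rfl⟩ := Nat.exists_eq_add_of_le' hn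
  rw [Nat.add_sub_cancel, discretePrimitive_succ, add_sub_cancel_left, inv_smul_smul₀ hτ]

variable (M A : E →ₗ[𝕜] F) {τ : 𝕜}

theorem map_add_map_discretePrimitive_eq_zero (hτ : τ ≠ 0) {u : ℕ → E}
    (hu : ∀ n, 1 ≤ n → M (τ⁻¹ • (u n - u (n - 1))) + A (u n) = 0)
    {w₀ : E} (hw₀ : A w₀ = -M (u 0)) (n : ℕ) :
    M (u n) + A (discretePrimitive τ w₀ u n) = 0 := by
  induction n with
  | zero => rw [discretePrimitive_zero, hw₀, add_neg_cancel]
  | succ n ih =>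
    have step := congrArg (τ • ·) (hu (n + 1) (Nat.le_add_left 1 n))
    simp only [Nat.add_sub_cancel, map_smul, smul_add, smul_inv_smul₀ hτ, map_sub,
      smul_zero] at step
    rw [discretePrimitive_succ, map_add, map_smul]
    linear_combination (norm := module) step + ih

theorem discretePrimitive_implicitEuler (hτ : τ ≠ 0) {u : ℕ → E}
    (hu : ∀ n, 1 ≤ n → M (τ⁻¹ • (u n - u (n - 1))) + A (u n) = 0)
    {w₀ : E} (hw₀ : A w₀ = -M (u 0)) (n : ℕ) (hn : 1 ≤ n) :
    M (τ⁻¹ • (discretePrimitive τ w₀ u n - discretePrimitive τ w₀ u (n - 1))) +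
      A (discretePrimitive τ w₀ u n) = 0 := by
  rw [inv_smul_discretePrimitive_sub_pred hτ w₀ u hn]
  exact map_add_map_discretePrimitive_eq_zero M A hτ hu hw₀ n

end ImplicitEuler

theorem stmt_13_general
    {W1 W2 : Type*} [NormedAddCommGroup W1] [InnerProductSpace ℝ W1]
    [NormedAddCommGroup W2] [InnerProductSpace ℝ W2]
    (V1 : Submodule ℝ W1) (V2 : Submodule ℝ W2)
    (d : V1 →ₗ[ℝ] W2) (dstar : V2 →ₗ[ℝ] W1)
    (α β : W1 ≃L[ℝ] W1) (γ : W2 ≃L[ℝ] W2)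
    (τ : ℝ) (hτ : 0 < τ)
    (u : ℕ → V1) (us : ℕ → V2)
    (heq1 : ∀ n : ℕ, 1 ≤ n →
      α (τ⁻¹ • ((u n : W1) - (u (n - 1) : W1))) - dstar (us n) = -β ((u n : W1)))
    (heq2 : ∀ n : ℕ, 1 ≤ n →
      γ (τ⁻¹ • ((us n : W2) - (us (n - 1) : W2))) + d (u n) = 0)
    (w0 : V1) (ws0 : V2)
    (hinit1 : β ((w0 : W1)) - dstar ws0 = -α ((u 0 : W1)))
    (hinit2 : d w0 = -γ ((us 0 : W2)))
    (w : ℕ → V1) (ws : ℕ → V2)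
    (hw : ∀ n : ℕ, w n = w0 + τ • ∑ k ∈ Finset.Icc 1 n, u k)
    (hws : ∀ n : ℕ, ws n = ws0 + τ • ∑ k ∈ Finset.Icc 1 n, us k) :
    ∀ n : ℕ, 1 ≤ n →
      α (τ⁻¹ • ((w n : W1) - (w (n - 1) : W1))) - dstar (ws n) = -β ((w n : W1)) ∧
      γ (τ⁻¹ • ((ws n : W2) - (ws (n - 1) : W2))) + d (w n) = 0 := by
  intro n hn
  let M : V1 × V2 →ₗ[ℝ] W1 × W2 :=
    (α.toLinearMap ∘ₗ V1.subtype).prodMap (γ.toLinearMap ∘ₗ V2.subtype)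
  let A : V1 × V2 →ₗ[ℝ] W1 × W2 :=
    (β.toLinearMap ∘ₗ V1.subtype ∘ₗ LinearMap.fst ℝ V1 V2 - dstar ∘ₗ LinearMap.snd ℝ V1 V2).prod
      (d ∘ₗ LinearMap.fst ℝ V1 V2)
  have scheme_iff : ∀ x y : V1 × V2,
      M x + A y = 0 ↔ α (x.1 : W1) - dstar y.2 = -β (y.1 : W1) ∧ γ (x.2 : W2) + d y.1 = 0 := by
    intro x y
    change (α (x.1 : W1), γ (x.2 : W2)) + (β (y.1 : W1) - dstar y.2, d y.1) = 0 ↔ _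
    simp only [Prod.ext_iff, Prod.fst_add, Prod.snd_add, Prod.fst_zero, Prod.snd_zero]
    refine and_congr ?_ Iff.rfl
    constructor <;> intro h <;> linear_combination (norm := module) h
  have hpair : ∀ m, (w m, ws m) = discretePrimitive τ (w0, ws0) (fun k ↦ (u k, us k)) m := by
    intro m
    rw [discretePrimitive_prodMk, hw, hws]
    rfl
  have hu : ∀ m, 1 ≤ m →
      M (τ⁻¹ • ((u m, us m) - (u (m - 1), us (m - 1)))) + A (u m, us m) = 0 := fun m hm ↦
    (scheme_iff _ _).2 (by simpa using And.intro (heq1 m hm) (heq2 m hm))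
  have hw0 : A (w0, ws0) = -M (u 0, us 0) := by
    rw [eq_neg_iff_add_eq_zero, add_comm, scheme_iff]
    exact ⟨by linear_combination (norm := module) hinit1, by simp [hinit2]⟩
  have key := discretePrimitive_implicitEuler M A hτ.ne' hu hw0 n hn
  rw [← hpair, ← hpair, scheme_iff] at key
  simpa using key

/-- The discrete primitives w_n = w₀ + τ Σ_{k=1}^n u_k, w_n* = w₀* + τ Σ_{k=1}^n u_k*
of a solution of the implicit Euler scheme satisfy the same discrete evolution
equations α d_τ w_n − d* w_n* = −β w_n and γ d_τ w_n* + d w_n = 0 for n ≥ 1. -/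
theorem stmt_13
    {W1 W2 : Type*} [NormedAddCommGroup W1] [InnerProductSpace ℝ W1] [CompleteSpace W1]
    [NormedAddCommGroup W2] [InnerProductSpace ℝ W2] [CompleteSpace W2]
    (V1 : Submodule ℝ W1) (V2 : Submodule ℝ W2)
    (d : V1 →ₗ[ℝ] W2) (dstar : V2 →ₗ[ℝ] W1)
    (hadj : ∀ (u : V1) (us : V2), ⟪dstar us, (u : W1)⟫ = ⟪(us : W2), d u⟫)
    (α β : W1 ≃L[ℝ] W1) (γ : W2 ≃L[ℝ] W2)
    (τ : ℝ) (hτ : 0 < τ)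
    (u : ℕ → V1) (us : ℕ → V2)
    (heq1 : ∀ n : ℕ, 1 ≤ n →
      α (τ⁻¹ • ((u n : W1) - (u (n - 1) : W1))) - dstar (us n) = -β ((u n : W1)))
    (heq2 : ∀ n : ℕ, 1 ≤ n →
      γ (τ⁻¹ • ((us n : W2) - (us (n - 1) : W2))) + d (u n) = 0)
    (w0 : V1) (ws0 : V2)
    (hinit1 : β ((w0 : W1)) - dstar ws0 = -α ((u 0 : W1)))
    (hinit2 : d w0 = -γ ((us 0 : W2)))
    (w : ℕ → V1) (ws : ℕ → V2)
    (hw : ∀ n : ℕ, w n = w0 + τ • ∑ k ∈ Finset.Icc 1 n, u k)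
    (hws : ∀ n : ℕ, ws n = ws0 + τ • ∑ k ∈ Finset.Icc 1 n, us k) :
    ∀ n : ℕ, 1 ≤ n →
      α (τ⁻¹ • ((w n : W1) - (w (n - 1) : W1))) - dstar (ws n) = -β ((w n : W1)) ∧
      γ (τ⁻¹ • ((ws n : W2) - (ws (n - 1) : W2))) + d (w n) = 0 :=
  stmt_13_general V1 V2 d dstar α β γ τ hτ u us heq1 heq2 w0 ws0 hinit1 hinit2 w ws hw hws
end

section
/- Let d : V¹ ⊆ W¹ → W² be densely defined and closed with closed range, d* its adjoint, and β : W¹ → W¹, γ : W² → W² selfadjoint positive bounded isomorphisms. Given f ∈ W¹ and g ∈ Range(d) ⊆ W², the saddle-point system β w₀ − d* w₀* = f, d w₀ = g has a unique solution (w₀, w₀*) ∈ V¹ × (V₂* ∩ N(d*)^⊥). -/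
/-!
Choose `v` with `d v = g` and correct it inside the closed subspace `N(d)` by Lax–Milgram, so that
`y := β w₀ - f` is orthogonal to `N(d)`. Since `Range(d)` is closed, the open mapping theorem on the
graph of `d` yields preimages of controlled norm, hence `d u ↦ ⟪y, u⟫` is a bounded functional on
`Range(d)`. Its Riesz representative `w₀* ∈ Range(d)` lies in the domain of `d*` (maximality of the
adjoint), satisfies `d* w₀* = y` by density of `V¹`, and is orthogonal to `N(d*)` because
`Range(d) ⊥ N(d*)`. For uniqueness, the difference `(u, z)` of two solutions has
`⟪β u, u⟫ = ⟪d* z, u⟫ = ⟪z, d u⟫ = 0`, so `u = 0`, then `d* z = 0` and `z ⊥ z`.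
-/

open scoped RealInnerProductSpace

section ClosedGraph

variable {𝕜 E F : Type*} [NontriviallyNormedField 𝕜]
  [NormedAddCommGroup E] [NormedSpace 𝕜 E] [NormedAddCommGroup F] [NormedSpace 𝕜 F]
  {V : Submodule 𝕜 E} {d : V →ₗ[𝕜] F}

theorem isClosed_map_ker_of_isClosed_graph
    (hd : IsClosed {p : E × F | ∃ v : V, (v : E) = p.1 ∧ d v = p.2}) :
    IsClosed (((LinearMap.ker d).map V.subtype : Submodule 𝕜 E) : Set E) := by
  have : (((LinearMap.ker d).map V.subtype : Submodule 𝕜 E) : Set E) =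
      (fun x : E => (x, (0 : F))) ⁻¹' {p : E × F | ∃ v : V, (v : E) = p.1 ∧ d v = p.2} := by
    ext x
    simp [and_comm]
  rw [this]
  exact hd.preimage (continuous_id.prodMk continuous_const)

theorem exists_preimage_norm_le_of_isClosed_graph [CompleteSpace E] [CompleteSpace F]
    (hd : IsClosed {p : E × F | ∃ v : V, (v : E) = p.1 ∧ d v = p.2})
    (hrange : IsClosed (Set.range d)) :
    ∃ C, ∀ u : V, ∃ v : V, d v = d u ∧ ‖(v : E)‖ ≤ C * ‖d u‖ := by
  set Γ := LinearMap.range (V.subtype.prod d)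
  have hΓ : (Γ : Set (E × F)) = {p : E × F | ∃ v : V, (v : E) = p.1 ∧ d v = p.2} := by
    ext p
    simp [Γ, Prod.ext_iff]
  have : CompleteSpace Γ := (hΓ ▸ hd : IsClosed (Γ : Set (E × F))).completeSpace_coe
  have : CompleteSpace (LinearMap.range d) :=
    (hrange : IsClosed (LinearMap.range d : Set F)).completeSpace_coe
  let π : Γ →L[𝕜] LinearMap.range d :=
    ((ContinuousLinearMap.snd 𝕜 E F).comp Γ.subtypeL).codRestrict _ <| by
      rintro ⟨_, v, rfl⟩
      exact ⟨v, rfl⟩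
  have hπ : Function.Surjective π := by
    rintro ⟨_, v, rfl⟩
    exact ⟨⟨_, v, rfl⟩, rfl⟩
  obtain ⟨C, -, hC⟩ := π.exists_preimage_norm_le hπ
  refine ⟨C, fun u => ?_⟩
  obtain ⟨⟨_, v, rfl⟩, hq, hqC⟩ := hC ⟨d u, u, rfl⟩
  exact ⟨v, congrArg Subtype.val hq, (norm_fst_le _).trans hqC⟩

end ClosedGraph

section InnerProduct

variable {E F : Type*} [NormedAddCommGroup E] [InnerProductSpace ℝ E]
  [NormedAddCommGroup F] [InnerProductSpace ℝ F]

theorem exists_mem_inner_eq_of_coercive (K : Submodule ℝ E) [CompleteSpace K] (β : E →L[ℝ] E)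
    {c : ℝ} (hc : 0 < c) (hβ : ∀ x ∈ K, c * ‖x‖ ^ 2 ≤ ⟪β x, x⟫) (a : E) :
    ∃ k ∈ K, ∀ z ∈ K, ⟪β k, z⟫ = ⟪a, z⟫ := by
  let B : K →L[ℝ] K →L[ℝ] ℝ :=
    (innerSL ℝ).bilinearComp ((β : E →L[ℝ] E).comp K.subtypeL) K.subtypeL
  have hB : IsCoercive B := ⟨c, hc, fun x => by
    simpa [B, mul_assoc, ← pow_two] using hβ x x.2⟩
  let a' : K := (InnerProductSpace.toDual ℝ K).symm ((innerSL ℝ a).comp K.subtypeL)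
  refine ⟨hB.continuousLinearEquivOfBilin.symm a', Submodule.coe_mem _, fun z hz => ?_⟩
  have h := hB.continuousLinearEquivOfBilin_apply (hB.continuousLinearEquivOfBilin.symm a') ⟨z, hz⟩
  rw [ContinuousLinearEquiv.apply_symm_apply, InnerProductSpace.toDual_symm_apply] at h
  simpa [B] using h.symm

variable {V : Submodule ℝ E} {d : V →ₗ[ℝ] F}

theorem exists_inner_apply_eq_of_perp_ker [CompleteSpace F] (hrange : IsClosed (Set.range d))
    {C : ℝ} (hC : ∀ u : V, ∃ v : V, d v = d u ∧ ‖(v : E)‖ ≤ C * ‖d u‖)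
    {y : E} (hy : ∀ u : V, d u = 0 → ⟪y, (u : E)⟫ = 0) :
    ∃ w : V, ∀ u : V, ⟪d w, d u⟫ = ⟪y, (u : E)⟫ := by
  have : CompleteSpace (LinearMap.range d) :=
    (hrange : IsClosed (LinearMap.range d : Set F)).completeSpace_coe
  let ℓ₀ : LinearMap.range d →ₗ[ℝ] ℝ :=
    (LinearMap.ker d).liftQ ((innerₗ E y).comp V.subtype)
      (fun u hu => LinearMap.mem_ker.mpr (hy u (LinearMap.mem_ker.mp hu))) ∘ₗ
      d.quotKerEquivRange.symm.toLinearMap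
  have hℓ₀ : ∀ u : V, ℓ₀ ⟨d u, u, rfl⟩ = ⟪y, (u : E)⟫ := fun u => by
    have : d.quotKerEquivRange.symm ⟨d u, u, rfl⟩ = Submodule.Quotient.mk u :=
      d.quotKerEquivRange.symm_apply_eq.mpr rfl
    simp [ℓ₀, this]
  have hbound : ∀ r, ‖ℓ₀ r‖ ≤ ‖y‖ * C * ‖r‖ := by
    rintro ⟨_, u, rfl⟩
    obtain ⟨v, hvu, hvC⟩ := hC u
    have : ℓ₀ ⟨d u, u, rfl⟩ = ℓ₀ ⟨d v, v, rfl⟩ := by simp only [hvu]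
    rw [this, hℓ₀, Real.norm_eq_abs, mul_assoc]
    exact (abs_real_inner_le_norm _ _).trans (mul_le_mul_of_nonneg_left hvC (norm_nonneg y))
  obtain ⟨w, hw⟩ := ((InnerProductSpace.toDual ℝ _).symm (ℓ₀.mkContinuous _ hbound)).2
  refine ⟨w, fun u => ?_⟩
  have h := InnerProductSpace.toDual_symm_apply (x := (⟨d u, u, rfl⟩ : LinearMap.range d))
    (y := ℓ₀.mkContinuous _ hbound)
  rwa [Submodule.coe_inner, ← hw, LinearMap.mkContinuous_apply, hℓ₀] at h

end InnerProduct

section SaddlePoint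

variable {W1 W2 : Type*} [NormedAddCommGroup W1] [InnerProductSpace ℝ W1]
  [NormedAddCommGroup W2] [InnerProductSpace ℝ W2]
  {V1 : Submodule ℝ W1} {V2 : Submodule ℝ W2} {d : V1 →ₗ[ℝ] W2} {dstar : V2 →ₗ[ℝ] W1}

def IsSaddlePoint (d : V1 →ₗ[ℝ] W2) (dstar : V2 →ₗ[ℝ] W1) (β : W1 → W1) (f : W1) (g : W2)
    (p : V1 × V2) : Prop :=
  (∀ z : V2, dstar z = 0 → ⟪(p.2 : W2), (z : W2)⟫ = 0) ∧ β p.1 - dstar p.2 = f ∧ d p.1 = g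

theorem IsSaddlePoint.unique {β : W1 →L[ℝ] W1} (hβ : ∀ x ≠ 0, 0 < ⟪β x, x⟫)
    (hadj : ∀ (u : V1) (z : V2), ⟪dstar z, (u : W1)⟫ = ⟪(z : W2), d u⟫)
    {f : W1} {g : W2} {p q : V1 × V2} (hp : IsSaddlePoint d dstar β f g p)
    (hq : IsSaddlePoint d dstar β f g q) : p = q := by
  obtain ⟨hp_orth, hp_eq, hp_d⟩ := hp
  obtain ⟨hq_orth, hq_eq, hq_d⟩ := hq
  set u := p.1 - q.1
  set z := p.2 - q.2
  have hdu : d u = 0 := by simp [u, hp_d, hq_d]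
  have hβu : β u = dstar z := by
    simp only [u, z, Submodule.coe_sub, map_sub]
    linear_combination (norm := module) hp_eq - hq_eq
  have hu : (u : W1) = 0 := by
    by_contra hu
    simpa [hβu, hadj, hdu] using hβ _ hu
  have hdz : dstar z = 0 := by rw [← hβu, hu, map_zero]
  have hz : (z : W2) = 0 := by
    have hzz : ⟪(z : W2), (z : W2)⟫ = ⟪(p.2 : W2), z⟫ - ⟪(q.2 : W2), z⟫ := inner_sub_left _ _ _
    rw [← inner_self_eq_zero (𝕜 := ℝ), hzz, hp_orth z hdz, hq_orth z hdz, sub_zero]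
  exact Prod.ext (sub_eq_zero.mp (Subtype.ext hu)) (sub_eq_zero.mp (Subtype.ext hz))

theorem exists_apply_eq_and_inner_ker_eq_zero [CompleteSpace W1]
    (hd : IsClosed {p : W1 × W2 | ∃ v : V1, (v : W1) = p.1 ∧ d v = p.2})
    (β : W1 →L[ℝ] W1) {c : ℝ} (hc : 0 < c) (hβ : ∀ x, c * ‖x‖ ^ 2 ≤ ⟪β x, x⟫)
    (f : W1) {g : W2} (hg : ∃ v : V1, d v = g) :
    ∃ w : V1, d w = g ∧ ∀ u : V1, d u = 0 → ⟪β w - f, (u : W1)⟫ = 0 := by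
  obtain ⟨v, rfl⟩ := hg
  set K := (LinearMap.ker d).map V1.subtype
  have : CompleteSpace K := (isClosed_map_ker_of_isClosed_graph hd).completeSpace_coe
  -- correct `v` by the solution `k ∈ N(d)` of `⟪β (v + k), z⟫ = ⟪f, z⟫` for `z ∈ N(d)`
  obtain ⟨_, ⟨k, hk, rfl⟩, hβk⟩ :=
    exists_mem_inner_eq_of_coercive K β hc (fun x _ => hβ x) (f - β v)
  refine ⟨v + k, by simp [LinearMap.mem_ker.mp hk], fun u hu => ?_⟩
  have := hβk u ⟨u, hu, rfl⟩
  simp only [Submodule.coe_subtype, Submodule.coe_add, map_add, inner_sub_left, inner_add_left]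
    at this ⊢
  linarith

theorem exists_adjoint_apply_eq_of_inner_ker_eq_zero [CompleteSpace W1] [CompleteSpace W2]
    (hV1 : Dense (V1 : Set W1))
    (hd : IsClosed {p : W1 × W2 | ∃ v : V1, (v : W1) = p.1 ∧ d v = p.2})
    (hrange : IsClosed (Set.range d))
    (hadj : ∀ (u : V1) (z : V2), ⟪dstar z, (u : W1)⟫ = ⟪(z : W2), d u⟫)
    (hadj_max : ∀ z : W2, (∃ y : W1, ∀ u : V1, ⟪y, (u : W1)⟫ = ⟪z, d u⟫) → z ∈ V2)
    {y : W1} (hy : ∀ u : V1, d u = 0 → ⟪y, (u : W1)⟫ = 0) :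
    ∃ z : V2, dstar z = y ∧ ∀ z' : V2, dstar z' = 0 → ⟪(z : W2), (z' : W2)⟫ = 0 := by
  obtain ⟨C, hC⟩ := exists_preimage_norm_le_of_isClosed_graph hd hrange
  obtain ⟨w, hw⟩ := exists_inner_apply_eq_of_perp_ker hrange hC hy
  let z : V2 := ⟨d w, hadj_max _ ⟨y, fun u => (hw u).symm⟩⟩
  refine ⟨z, ?_, fun z' hz' => ?_⟩
  · refine sub_eq_zero.mp (hV1.eq_zero_of_inner_left ℝ fun u hu => ?_)
    rw [inner_sub_left, hadj ⟨u, hu⟩ z, hw, sub_self]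
  · rw [real_inner_comm, ← hadj w z', hz', inner_zero_left]

end SaddlePoint

theorem stmt_15_general
    {W1 W2 : Type*} [NormedAddCommGroup W1] [InnerProductSpace ℝ W1] [CompleteSpace W1]
    [NormedAddCommGroup W2] [InnerProductSpace ℝ W2] [CompleteSpace W2]
    (V1 : Submodule ℝ W1) (V2 : Submodule ℝ W2)
    (hV1 : Dense (V1 : Set W1))
    (d : V1 →ₗ[ℝ] W2) (dstar : V2 →ₗ[ℝ] W1)
    (hd : IsClosed {p : W1 × W2 | ∃ v : V1, (v : W1) = p.1 ∧ d v = p.2})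
    (hrange : IsClosed (Set.range fun v : V1 => d v))
    (hadj : ∀ (u : V1) (us : V2), ⟪dstar us, (u : W1)⟫ = ⟪(us : W2), d u⟫)
    (hadj_max : ∀ us : W2, (∃ y : W1, ∀ u : V1, ⟪y, (u : W1)⟫ = ⟪us, d u⟫) → us ∈ V2)
    (β : W1 ≃L[ℝ] W1)
    (cβ : ℝ) (hcβ : 0 < cβ)
    (hβcoer : ∀ x : W1, cβ * ‖x‖ ^ 2 ≤ ⟪β x, x⟫)
    (f : W1) (g : W2) (hg : ∃ v : V1, d v = g) :
    ∃! p : V1 × V2,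
      (∀ z : V2, dstar z = 0 → ⟪(p.2 : W2), (z : W2)⟫ = 0) ∧
      β ((p.1 : W1)) - dstar p.2 = f ∧ d p.1 = g := by
  obtain ⟨w, hwg, hw⟩ :=
    exists_apply_eq_and_inner_ker_eq_zero hd (β : W1 →L[ℝ] W1) hcβ hβcoer f hg
  obtain ⟨z, hz, hz_orth⟩ :=
    exists_adjoint_apply_eq_of_inner_ker_eq_zero hV1 hd hrange hadj hadj_max hw
  have hβpos : ∀ x ≠ 0, 0 < ⟪β x, x⟫ := fun x hx =>
    (by positivity : 0 < cβ * ‖x‖ ^ 2).trans_le (hβcoer x)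
  have hsol : IsSaddlePoint d dstar β f g (w, z) := ⟨hz_orth, by simp [hz], hwg⟩
  exact ⟨(w, z), hsol, fun q hq =>
    IsSaddlePoint.unique (β := (β : W1 →L[ℝ] W1)) hβpos hadj hq hsol⟩

/-- Solvability of the saddle-point system (Brezzi): for f ∈ W¹ and g ∈ Range(d),
the system β w₀ − d* w₀* = f, d w₀ = g has a unique solution
(w₀, w₀*) ∈ V¹ × (V₂* ∩ N(d*)^⊥). -/
theorem stmt_15
    {W1 W2 : Type*} [NormedAddCommGroup W1] [InnerProductSpace ℝ W1] [CompleteSpace W1]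
    [NormedAddCommGroup W2] [InnerProductSpace ℝ W2] [CompleteSpace W2]
    (V1 : Submodule ℝ W1) (V2 : Submodule ℝ W2)
    (hV1 : Dense (V1 : Set W1)) (hV2 : Dense (V2 : Set W2))
    (d : V1 →ₗ[ℝ] W2) (dstar : V2 →ₗ[ℝ] W1)
    (hd : IsClosed {p : W1 × W2 | ∃ v : V1, (v : W1) = p.1 ∧ d v = p.2})
    (hrange : IsClosed (Set.range fun v : V1 => d v))
    (hadj : ∀ (u : V1) (us : V2), ⟪dstar us, (u : W1)⟫ = ⟪(us : W2), d u⟫)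
    (hadj_max : ∀ us : W2, (∃ y : W1, ∀ u : V1, ⟪y, (u : W1)⟫ = ⟪us, d u⟫) → us ∈ V2)
    (β : W1 ≃L[ℝ] W1) (γ : W2 ≃L[ℝ] W2)
    (hβsym : ∀ x y : W1, ⟪β x, y⟫ = ⟪x, β y⟫)
    (hγsym : ∀ x y : W2, ⟪γ x, y⟫ = ⟪x, γ y⟫)
    (cβ cγ : ℝ) (hcβ : 0 < cβ) (hcγ : 0 < cγ)
    (hβcoer : ∀ x : W1, cβ * ‖x‖ ^ 2 ≤ ⟪β x, x⟫)
    (hγcoer : ∀ x : W2, cγ * ‖x‖ ^ 2 ≤ ⟪γ x, x⟫)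
    (f : W1) (g : W2) (hg : ∃ v : V1, d v = g) :
    ∃! p : V1 × V2,
      (∀ z : V2, dstar z = 0 → ⟪(p.2 : W2), (z : W2)⟫ = 0) ∧
      β ((p.1 : W1)) - dstar p.2 = f ∧ d p.1 = g :=
  stmt_15_general V1 V2 hV1 d dstar hd hrange hadj hadj_max β cβ hcβ hβcoer f g hg
end
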